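/- For every U in SU(2) and every index j, the conjugated Pauli matrix satisfies U * σⱼ * Uᴴ = Σᵢ (π(U) i j) • σᵢ, where the real coefficients π(U) i j act by scalar multiplication on the complex matrices σᵢ. Consequently, the Bloch vector of U·ψ is obtained from the Bloch vector of ψ by the rotation π(U), so every single-qubit quantum recurrent computation is exactly reproduced by tracking a 3D vector under SO(3) rotations. -/
import Mathlib


open Matrix Complex

noncomputable def sigma : Fin 3 → Matrix (Fin 2) (Fin 2) ℂ :=
  ![!![0, 1; 1, 0], !![0, -Complex.I; Complex.I, 0], !![1, 0; 0, -1]]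

abbrev SU2 := Matrix.specialUnitaryGroup (Fin 2) ℂ

noncomputable def piMap (U : Matrix (Fin 2) (Fin 2) ℂ) : Matrix (Fin 3) (Fin 3) ℝ :=
  Matrix.of fun i j => (((1 : ℂ) / 2) * Matrix.trace (sigma i * U * sigma j * Uᴴ)).re

lemma pauli_expand (M : Matrix (Fin 2) (Fin 2) ℂ) (hH : Mᴴ = M) (hT : Matrix.trace M = 0) :
    M = ∑ i : Fin 3, (((1 : ℂ) / 2) * Matrix.trace (sigma i * M)).re • sigma i := by
  have h10 : M 1 0 = starRingEnd ℂ (M 0 1) := by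
    have := congrFun (congrFun hH 1) 0
    simpa [Matrix.conjTranspose_apply] using this.symm
  have h00 : M 1 1 = - M 0 0 := by
    have : M 0 0 + M 1 1 = 0 := by simpa [Matrix.trace_fin_two] using hT
    linear_combination this
  have h00r : (M 0 0).im = 0 := by
    have := congrFun (congrFun hH 0) 0
    simp [Matrix.conjTranspose_apply, Complex.ext_iff] at this
    linarith [this]
  ext i j
  fin_cases i <;> fin_cases j <;>
    simp [sigma, Fin.sum_univ_succ, Matrix.trace_fin_two, Matrix.mul_apply,
      h10, h00, Complex.ext_iff, Matrix.smul_apply] <;>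
    constructor <;> ring_nf <;> simp [h00r]

theorem stmt15 (U : SU2) (j : Fin 3) :
    (U : Matrix (Fin 2) (Fin 2) ℂ) * sigma j * (U : Matrix (Fin 2) (Fin 2) ℂ)ᴴ =
      ∑ i : Fin 3, (piMap (U : Matrix (Fin 2) (Fin 2) ℂ) i j) • sigma i := by
  have hU : (U : Matrix (Fin 2) (Fin 2) ℂ)ᴴ * (U : Matrix (Fin 2) (Fin 2) ℂ) = 1 :=
    (Matrix.mem_unitaryGroup_iff'.mp U.2.1)
  have hsH : (sigma j)ᴴ = sigma j := by
    fin_cases j <;> ext i k <;> fin_cases i <;> fin_cases k <;>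
      simp [sigma, Matrix.conjTranspose_apply]
  set M := (U : Matrix (Fin 2) (Fin 2) ℂ) * sigma j * (U : Matrix (Fin 2) (Fin 2) ℂ)ᴴ with hM
  have hH : Mᴴ = M := by
    simp [hM, Matrix.conjTranspose_mul, hsH, Matrix.mul_assoc]
  have hsT : Matrix.trace (sigma j) = 0 := by
    fin_cases j <;> simp [sigma, Matrix.trace_fin_two]
  have hT : Matrix.trace M = 0 := by
    rw [hM, Matrix.trace_mul_cycle, hU, Matrix.one_mul, hsT]
  have := pauli_expand M hH hT
  rw [this]
  congr 1
  funext i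
  congr 2
  simp only [piMap, Matrix.of_apply, hM, Matrix.mul_assoc]
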